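/- Let (Y,X,Z) ∼ Q⁰ = P_{YX} × e_{Z|X} form a Markov chain Y−X−Z. Then the shared information SI(Y;X,Z) := I(Y;X) − UI(Y;X∖Z) evaluated at Q⁰ equals I_{Q⁰}(Y;Z), and the complementary information CI(Y;X,Z) := I(Y;X|Z) − UI(Y;X∖Z) evaluated at Q⁰ equals 0, as does UI(Y;Z∖X). -/

import Mathlib

open scoped BigOperators
open Real

noncomputable section

variable {W X Y Z : Type*}

/-- A channel (row-stochastic conditional distribution) from `X` to `Y`. -/
def IsChannel [Fintype Y] (k : X → Y → ℝ) : Prop :=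
  (∀ x y, 0 ≤ k x y) ∧ ∀ x, ∑ y, k x y = 1

/-- A probability distribution on a finite set. -/
def IsDist [Fintype X] (p : X → ℝ) : Prop :=
  (∀ x, 0 ≤ p x) ∧ ∑ x, p x = 1

/-- Composition of a decoder `d : Z → Y` with an encoder `e : X → Z`:
`(d ∘ e)(y|x) = ∑ z d(y|z) e(z|x)`. -/
def chComp [Fintype Z] (d : Z → Y → ℝ) (e : X → Z → ℝ) : X → Y → ℝ :=
  fun x y => ∑ z, d z y * e x z

/-- Conditional KL divergence `D(k ‖ l | pi) = ∑_x pi x ∑_y k(y|x) log (k(y|x)/l(y|x))`. -/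
def condKL [Fintype X] [Fintype Y] (pi : X → ℝ) (k l : X → Y → ℝ) : ℝ :=
  ∑ x, pi x * ∑ y, k x y * Real.log (k x y / l x y)

/-- Deficiency of a decoder `d` w.r.t. a channel `k`, weighted by `pi`:
the infimum over encoders `e` of `D(k ‖ d∘e | pi)`. -/
def deficiency [Fintype X] [Fintype Y] [Fintype Z]
    (pi : X → ℝ) (d : Z → Y → ℝ) (k : X → Y → ℝ) : ℝ :=
  sInf {r : ℝ | ∃ e : X → Z → ℝ, IsChannel e ∧ r = condKL pi k (chComp d e)}

/-- A joint probability mass function for a triple `(Y, X, Z)`. -/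
def IsPMF3 [Fintype X] [Fintype Y] [Fintype Z] (p : Y → X → Z → ℝ) : Prop :=
  (∀ y x z, 0 ≤ p y x z) ∧ ∑ y, ∑ x, ∑ z, p y x z = 1

def mYX [Fintype Z] (p : Y → X → Z → ℝ) : Y → X → ℝ := fun y x => ∑ z, p y x z
def mYZ [Fintype X] (p : Y → X → Z → ℝ) : Y → Z → ℝ := fun y z => ∑ x, p y x z
def mXZ [Fintype Y] (p : Y → X → Z → ℝ) : X → Z → ℝ := fun x z => ∑ y, p y x z
def mX  [Fintype Y] [Fintype Z] (p : Y → X → Z → ℝ) : X → ℝ := fun x => ∑ y, ∑ z, p y x z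
def mY  [Fintype X] [Fintype Z] (p : Y → X → Z → ℝ) : Y → ℝ := fun y => ∑ x, ∑ z, p y x z
def mZ  [Fintype X] [Fintype Y] (p : Y → X → Z → ℝ) : Z → ℝ := fun z => ∑ y, ∑ x, p y x z

/-- Mutual information of a bivariate joint distribution (in nats). -/
def MI2 [Fintype X] [Fintype Y] (q : X → Y → ℝ) : ℝ :=
  ∑ x, ∑ y, q x y * Real.log (q x y / ((∑ y', q x y') * (∑ x', q x' y)))

/-- `I(Y; (X,Z))` for a joint triple distribution (in nats). -/
def MI_Y_XZ [Fintype X] [Fintype Y] [Fintype Z] (p : Y → X → Z → ℝ) : ℝ :=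
  ∑ y, ∑ x, ∑ z, p y x z * Real.log (p y x z / (mY p y * mXZ p x z))

/-- Conditional mutual information `I(Y;X|Z)` (in nats). -/
def CMI_YX_gZ [Fintype X] [Fintype Y] [Fintype Z] (p : Y → X → Z → ℝ) : ℝ :=
  ∑ y, ∑ x, ∑ z, p y x z * Real.log ((p y x z * mZ p z) / (mYZ p y z * mXZ p x z))

/-- Conditional mutual information `I(Y;Z|X)` (in nats). -/
def CMI_YZ_gX [Fintype X] [Fintype Y] [Fintype Z] (p : Y → X → Z → ℝ) : ℝ :=
  ∑ y, ∑ x, ∑ z, p y x z * Real.log ((p y x z * mX p x) / (mYX p y x * mXZ p x z))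

/-- The set `Δ_P` of joint distributions matching `p` on the `(Y,X)`- and `(Y,Z)`-marginals. -/
def deltaP [Fintype X] [Fintype Y] [Fintype Z] (p : Y → X → Z → ℝ) : Set (Y → X → Z → ℝ) :=
  {q | IsPMF3 q ∧ mYX q = mYX p ∧ mYZ q = mYZ p}

/-- Unique information `UI(Y; X ∖ Z) = inf_{Q ∈ Δ_P} I_Q(Y;X|Z)`. -/
def UIX [Fintype X] [Fintype Y] [Fintype Z] (p : Y → X → Z → ℝ) : ℝ :=
  sInf {r : ℝ | ∃ q ∈ deltaP p, r = CMI_YX_gZ q}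

/-- Unique information `UI(Y; Z ∖ X) = inf_{Q ∈ Δ_P} I_Q(Y;Z|X)`. -/
def UIZ [Fintype X] [Fintype Y] [Fintype Z] (p : Y → X → Z → ℝ) : ℝ :=
  sInf {r : ℝ | ∃ q ∈ deltaP p, r = CMI_YZ_gX q}

/-- Shannon entropy (in nats). -/
def entropy [Fintype X] (p : X → ℝ) : ℝ := ∑ x, -(p x * Real.log (p x))

end

/-!
By the chain rule, `I(Y;XZ) = I(Y;X) + I(Y;Z|X) = I(Y;Z) + I(Y;X|Z)`. On `Δ_P` the terms `I(Y;X)`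
and `I(Y;Z)` are fixed, so `I_Q(Y;X|Z) = I(Y;X) - I(Y;Z) + I_Q(Y;Z|X)` for every `Q ∈ Δ_P`.
Since `I_Q(Y;Z|X) ≥ 0` (Gibbs' inequality) and it vanishes at the Markov distribution
`Q⁰ ∈ Δ_P`, both infima defining the unique informations are attained at `Q⁰`.
-/

open Finset

theorem sub_le_mul_log_div {a b : ℝ} (ha : 0 ≤ a) (hb : 0 ≤ b) (hab : 0 < a → 0 < b) :
    a - b ≤ a * log (a / b) := by
  rcases ha.eq_or_lt with rfl | ha
  · simpa using hb
  · have h := mul_le_mul_of_nonneg_left (one_sub_inv_le_log_of_pos (div_pos ha (hab ha))) ha.le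
    rwa [inv_div, mul_sub, mul_one, mul_div_cancel₀ _ ha.ne'] at h

theorem sum_mul_log_div_nonneg {ι : Type*} [Fintype ι] {a b : ι → ℝ} (ha : ∀ i, 0 ≤ a i)
    (hb : ∀ i, 0 ≤ b i) (hab : ∀ i, 0 < a i → 0 < b i) (hsum : ∑ i, b i ≤ ∑ i, a i) :
    0 ≤ ∑ i, a i * log (a i / b i) :=
  calc 0 ≤ ∑ i, (a i - b i) := by rw [sum_sub_distrib]; linarith
    _ ≤ _ := sum_le_sum fun i _ => sub_le_mul_log_div (ha i) (hb i) (hab i)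

section Marginals

variable {X Y Z : Type*} {q : Y → X → Z → ℝ}

theorem mYX_nonneg [Fintype Z] (h0 : ∀ y x z, 0 ≤ q y x z) (y : Y) (x : X) : 0 ≤ mYX q y x :=
  sum_nonneg fun z _ => h0 y x z

theorem mXZ_nonneg [Fintype Y] (h0 : ∀ y x z, 0 ≤ q y x z) (x : X) (z : Z) : 0 ≤ mXZ q x z :=
  sum_nonneg fun y _ => h0 y x z

theorem mX_nonneg [Fintype Y] [Fintype Z] (h0 : ∀ y x z, 0 ≤ q y x z) (x : X) : 0 ≤ mX q x :=
  sum_nonneg fun y _ => mYX_nonneg h0 y x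

theorem le_mYX [Fintype Z] (h0 : ∀ y x z, 0 ≤ q y x z) (y : Y) (x : X) (z : Z) :
    q y x z ≤ mYX q y x :=
  single_le_sum (fun z _ => h0 y x z) (mem_univ z)

theorem le_mXZ [Fintype Y] (h0 : ∀ y x z, 0 ≤ q y x z) (y : Y) (x : X) (z : Z) :
    q y x z ≤ mXZ q x z :=
  single_le_sum (fun y _ => h0 y x z) (mem_univ y)

theorem mYX_le_mX [Fintype Y] [Fintype Z] (h0 : ∀ y x z, 0 ≤ q y x z) (y : Y) (x : X) :
    mYX q y x ≤ mX q x :=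
  single_le_sum (fun y _ => mYX_nonneg h0 y x) (mem_univ y)

theorem le_mX [Fintype Y] [Fintype Z] (h0 : ∀ y x z, 0 ≤ q y x z) (y : Y) (x : X) (z : Z) :
    q y x z ≤ mX q x :=
  (le_mYX h0 y x z).trans (mYX_le_mX h0 y x)

theorem le_mY [Fintype X] [Fintype Z] (h0 : ∀ y x z, 0 ≤ q y x z) (y : Y) (x : X) (z : Z) :
    q y x z ≤ mY q y :=
  (le_mYX h0 y x z).trans (single_le_sum (fun x _ => mYX_nonneg h0 y x) (mem_univ x))

theorem sum_mXZ [Fintype Y] [Fintype Z] (x : X) : ∑ z, mXZ q x z = mX q x :=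
  sum_comm

theorem mXZ_eq_of_markov [Fintype Y] [Fintype Z] {e : X → Z → ℝ}
    (hmarkov : ∀ y x z, q y x z = mYX q y x * e x z) (x : X) (z : Z) :
    mXZ q x z = mX q x * e x z := by
  simp only [mXZ, hmarkov, ← sum_mul]
  rfl

end Marginals

section InformationIdentities

variable {X Y Z : Type*} [Fintype X] [Fintype Y] [Fintype Z] {q : Y → X → Z → ℝ}

theorem MI_Y_XZ_eq_MI2_mYX_add_CMI_YZ_gX (h0 : ∀ y x z, 0 ≤ q y x z) :
    MI_Y_XZ q = MI2 (mYX q) + CMI_YZ_gX q := by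
  have hMI2 : MI2 (mYX q) = ∑ y, ∑ x, ∑ z, q y x z * log (mYX q y x / (mY q y * mX q x)) := by
    simp only [MI2, ← sum_mul]
    rfl
  rw [hMI2]
  simp only [MI_Y_XZ, CMI_YZ_gX, ← sum_add_distrib]
  refine sum_congr rfl fun y _ => sum_congr rfl fun x _ => sum_congr rfl fun z _ => ?_
  rcases (h0 y x z).eq_or_lt with hq | hq
  · simp [← hq]
  have hYX := hq.trans_le (le_mYX h0 y x z)
  have hXZ := hq.trans_le (le_mXZ h0 y x z)
  have hX := hq.trans_le (le_mX h0 y x z)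
  have hY := hq.trans_le (le_mY h0 y x z)
  rw [← mul_add, ← log_mul (by positivity) (by positivity)]
  congr 2
  field_simp

/-- `I(Y;XZ)` is symmetric in `X` and `Z`, so this is the previous chain rule for the
distribution with `X` and `Z` swapped. -/
theorem MI_Y_XZ_eq_MI2_mYZ_add_CMI_YX_gZ (h0 : ∀ y x z, 0 ≤ q y x z) :
    MI_Y_XZ q = MI2 (mYZ q) + CMI_YX_gZ q := by
  have hY : mY (fun y z x => q y x z) = mY q := funext fun y => sum_comm
  have hMI : MI_Y_XZ (fun y z x => q y x z) = MI_Y_XZ q := by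
    simp only [MI_Y_XZ, hY]
    exact sum_congr rfl fun y _ => sum_comm
  have hCMI : CMI_YZ_gX (fun y z x => q y x z) = CMI_YX_gZ q :=
    sum_congr rfl fun y _ => sum_comm
  rw [← hMI, ← hCMI]
  exact MI_Y_XZ_eq_MI2_mYX_add_CMI_YZ_gX fun y z x => h0 y x z

theorem CMI_YX_gZ_eq_sub_add (h0 : ∀ y x z, 0 ≤ q y x z) :
    CMI_YX_gZ q = MI2 (mYX q) - MI2 (mYZ q) + CMI_YZ_gX q := by
  linarith [MI_Y_XZ_eq_MI2_mYX_add_CMI_YZ_gX h0, MI_Y_XZ_eq_MI2_mYZ_add_CMI_YX_gZ h0]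

theorem CMI_YZ_gX_nonneg (h0 : ∀ y x z, 0 ≤ q y x z) : 0 ≤ CMI_YZ_gX q := by
  let a : Y × X × Z → ℝ := fun i => q i.1 i.2.1 i.2.2
  -- `b` is the Markov-chain distribution `q(y,x) q(x,z) / q(x)`, which has the same total mass.
  let b : Y × X × Z → ℝ := fun i => mYX q i.1 i.2.1 * mXZ q i.2.1 i.2.2 / mX q i.2.1
  have hb : ∀ i, 0 ≤ b i := fun i => by
    have := mYX_nonneg h0 i.1 i.2.1
    have := mXZ_nonneg h0 i.2.1 i.2.2
    have := mX_nonneg h0 i.2.1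
    positivity
  have hab : ∀ i, 0 < a i → 0 < b i := fun ⟨y, x, z⟩ hq => by
    have := hq.trans_le (le_mYX h0 y x z)
    have := hq.trans_le (le_mXZ h0 y x z)
    have := hq.trans_le (le_mX h0 y x z)
    positivity
  have hsum : ∑ i, b i = ∑ i, a i := by
    simp only [a, b, Fintype.sum_prod_type]
    refine sum_congr rfl fun y _ => sum_congr rfl fun x _ => ?_
    rw [← sum_div, ← mul_sum, sum_mXZ]
    rcases eq_or_ne (mX q x) 0 with hX | hX
    · rw [hX, div_zero]
      exact (le_antisymm (hX ▸ mYX_le_mX h0 y x) (mYX_nonneg h0 y x)).symm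
    · exact mul_div_cancel_right₀ _ hX
  have h := sum_mul_log_div_nonneg (fun i => h0 i.1 i.2.1 i.2.2) hb hab hsum.le
  simpa only [CMI_YZ_gX, a, b, Fintype.sum_prod_type, div_div_eq_mul_div] using h

theorem CMI_YZ_gX_eq_zero_of_markov (h0 : ∀ y x z, 0 ≤ q y x z) {e : X → Z → ℝ}
    (hmarkov : ∀ y x z, q y x z = mYX q y x * e x z) : CMI_YZ_gX q = 0 := by
  refine sum_eq_zero fun y _ => sum_eq_zero fun x _ => sum_eq_zero fun z _ => ?_
  rcases (h0 y x z).eq_or_lt with hq | hq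
  · rw [← hq, zero_mul]
  have hYX := (hq.trans_le (le_mYX h0 y x z)).ne'
  have hX := (hq.trans_le (le_mX h0 y x z)).ne'
  have he : e x z ≠ 0 := right_ne_zero_of_mul (hmarkov y x z ▸ hq.ne')
  have hratio : q y x z * mX q x / (mYX q y x * mXZ q x z) = 1 := by
    rw [mXZ_eq_of_markov hmarkov, hmarkov y x z]
    field_simp
  rw [hratio, log_one, mul_zero]

end InformationIdentities

section UniqueInformation

variable {X Y Z : Type*} [Fintype X] [Fintype Y] [Fintype Z] {p : Y → X → Z → ℝ}

theorem mem_deltaP_self (hp : IsPMF3 p) : p ∈ deltaP p :=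
  ⟨hp, rfl, rfl⟩

theorem CMI_YX_gZ_le_of_mem_deltaP (hp : ∀ y x z, 0 ≤ p y x z) {e : X → Z → ℝ}
    (hmarkov : ∀ y x z, p y x z = mYX p y x * e x z) {q : Y → X → Z → ℝ}
    (hq : q ∈ deltaP p) :
    CMI_YX_gZ p ≤ CMI_YX_gZ q := by
  obtain ⟨⟨hq0, -⟩, hYX, hYZ⟩ := hq
  rw [CMI_YX_gZ_eq_sub_add hp, CMI_YX_gZ_eq_sub_add hq0, hYX, hYZ,
    CMI_YZ_gX_eq_zero_of_markov hp hmarkov]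
  linarith [CMI_YZ_gX_nonneg hq0]

theorem UIX_eq_of_markov (hp : IsPMF3 p) {e : X → Z → ℝ}
    (hmarkov : ∀ y x z, p y x z = mYX p y x * e x z) : UIX p = CMI_YX_gZ p :=
  IsLeast.csInf_eq ⟨⟨p, mem_deltaP_self hp, rfl⟩,
    by rintro _ ⟨q, hq, rfl⟩; exact CMI_YX_gZ_le_of_mem_deltaP hp.1 hmarkov hq⟩

theorem UIZ_eq_zero_of_markov (hp : IsPMF3 p) {e : X → Z → ℝ}
    (hmarkov : ∀ y x z, p y x z = mYX p y x * e x z) : UIZ p = 0 :=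
  IsLeast.csInf_eq ⟨⟨p, mem_deltaP_self hp, (CMI_YZ_gX_eq_zero_of_markov hp.1 hmarkov).symm⟩,
    by rintro _ ⟨q, hq, rfl⟩; exact CMI_YZ_gX_nonneg hq.1.1⟩

end UniqueInformation

theorem SI_CI_of_markov_general
    {X Y Z : Type*} [Fintype X] [Fintype Y] [Fintype Z]
    (p : Y → X → Z → ℝ) (hp : IsPMF3 p)
    (e : X → Z → ℝ)
    (hmarkov : ∀ y x z, p y x z = mYX p y x * e x z) :
    MI2 (mYX p) - UIX p = MI2 (mYZ p) ∧
    CMI_YX_gZ p - UIX p = 0 ∧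
    UIZ p = 0 := by
  have hUIX := UIX_eq_of_markov hp hmarkov
  refine ⟨?_, by rw [hUIX, sub_self], UIZ_eq_zero_of_markov hp hmarkov⟩
  rw [hUIX, CMI_YX_gZ_eq_sub_add hp.1, CMI_YZ_gX_eq_zero_of_markov hp.1 hmarkov]
  ring

/-- for a zero-synergy distribution `Q⁰ = P_{YX} × e_{Z|X}`,
`SI(Y;X,Z) = I(Y;Z)`, `CI(Y;X,Z) = 0` and `UI(Y;Z∖X) = 0`. -/
theorem SI_CI_of_markov
    {X Y Z : Type*} [Fintype X] [Fintype Y] [Fintype Z]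
    (p : Y → X → Z → ℝ) (hp : IsPMF3 p)
    (e : X → Z → ℝ) (he : IsChannel e)
    (hmarkov : ∀ y x z, p y x z = mYX p y x * e x z) :
    MI2 (mYX p) - UIX p = MI2 (mYZ p) ∧
    CMI_YX_gZ p - UIX p = 0 ∧
    UIZ p = 0 :=
  SI_CI_of_markov_general p hp e hmarkov
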